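/- In the graph Q_{rs}^{x(p) y(q) −}, every vertex γ = βδ lying in a copy E_h with 1 ≤ h ≤ q (i.e. γ is a copy of the edge of Q with endpoints β and δ) has degree d_Q(β) + d_Q(δ) + r(n−2) − 2, where n = |V(Q)|. -/
import Mathlib


/-- Classical `Fintype` instance for neighbor sets of graphs on finite types. -/
noncomputable instance fintypeNeighborSetOfFinite {W : Type*} [Finite W]
    (G : SimpleGraph W) (v : W) : Fintype (G.neighborSet v) :=
  Fintype.ofFinite _

/-- Classical `Fintype` instance for the edge set of a graph on a finite type. -/
noncomputable instance fintypeEdgeSetOfFinite {W : Type*} [Finite W]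
    (G : SimpleGraph W) : Fintype G.edgeSet :=
  Fintype.ofFinite _

/-- The `(r,s)`-generalised transformation graph `Q_{rs}^{x(p) y(q) -}`.
Its vertices are `r` copies of `V(Q)` (indexed by `Fin r`) together with `s`
copies of `E(Q)` (indexed by `Fin s`).  The copy `V_g` carries the adjacency of
`Q` when `g < p` and that of the complement when `g ≥ p`; the copy `E_h`
carries line-graph adjacency (sharing an endpoint) when `h < q` and its
complement when `h ≥ q`; a vertex-copy vertex and an edge-copy vertex are
adjacent iff the vertex is NOT incident with the edge in `Q`. -/
def genTransMinus {V : Type*} (Q : SimpleGraph V) (r s p q : ℕ) :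
    SimpleGraph ((Fin r × V) ⊕ (Fin s × Q.edgeSet)) :=
  SimpleGraph.fromRel (fun a b =>
    match a, b with
    | Sum.inl (g, α), Sum.inl (g', β) =>
        g = g' ∧ (((g : ℕ) < p ∧ Q.Adj α β) ∨ (¬ (g : ℕ) < p ∧ ¬ Q.Adj α β))
    | Sum.inr (h, e), Sum.inr (h', f) =>
        h = h' ∧ (((h : ℕ) < q ∧ ∃ w, w ∈ (e : Sym2 V) ∧ w ∈ (f : Sym2 V)) ∨
                  (¬ (h : ℕ) < q ∧ ¬ ∃ w, w ∈ (e : Sym2 V) ∧ w ∈ (f : Sym2 V)))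
    | Sum.inl (_, α), Sum.inr (_, e) => α ∉ (e : Sym2 V)
    | Sum.inr (_, e), Sum.inl (_, α) => α ∉ (e : Sym2 V))

/-- In `Q_{rs}^{x(p) y(q) -}`, every vertex `γ = βδ` lying in a copy `E_h` with
`1 ≤ h ≤ q` has degree `d_Q(β) + d_Q(δ) + r(n−2) − 2`, where `n = |V(Q)|`. -/
theorem degree_genTransMinus_edgeCopy_le_q
    {V : Type*} [Fintype V] (Q : SimpleGraph V)
    (r s p q n : ℕ) (hr : 0 < r) (hs : 0 < s) (hp : p ≤ r) (hq : q ≤ s)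
    (hn : Fintype.card V = n)
    (h : Fin s) (hh : (h : ℕ) < q) (γ : Q.edgeSet) (β δ : V)
    (hγ : (γ : Sym2 V) = s(β, δ)) :
    ((genTransMinus Q r s p q).degree (Sum.inr (h, γ)) : ℤ) =
      (Q.degree β : ℤ) + Q.degree δ + (r : ℤ) * ((n : ℤ) - 2) - 2 := by
  classical
  set G := genTransMinus Q r s p q with hG
  set v : (Fin r × V) ⊕ (Fin s × Q.edgeSet) := Sum.inr (h, γ) with hv
  have hadjQ : Q.Adj β δ := by
    have h2 := γ.2
    rwa [hγ, Q.mem_edgeSet] at h2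
  have hβδ : β ≠ δ := hadjQ.ne
  have hdeg : G.degree v = Fintype.card {x // G.Adj v x} := by
    rw [← SimpleGraph.card_neighborSet_eq_degree]
    exact Fintype.card_congr (Equiv.subtypeEquivRight fun x => G.mem_neighborSet v x)
  have hadjL : ∀ a : Fin r × V, G.Adj v (Sum.inl a) ↔ a.2 ∉ (γ : Sym2 V) := by
    rintro ⟨g, α⟩
    simp [hG, hv, genTransMinus, SimpleGraph.fromRel_adj]
  have hadjR : ∀ b : Fin s × Q.edgeSet,
      G.Adj v (Sum.inr b) ↔ b.1 = h ∧ b.2 ≠ γ ∧ (β ∈ (b.2 : Sym2 V) ∨ δ ∈ (b.2 : Sym2 V)) := by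
    rintro ⟨h', f⟩
    simp only [hG, hv, genTransMinus, SimpleGraph.fromRel_adj, ne_eq, Sum.inr.injEq,
      Prod.mk.injEq, not_and, hγ, Sym2.mem_iff]
    constructor
    · rintro ⟨hne, hrel | hrel⟩
      · obtain ⟨rfl, hor⟩ := hrel
        rcases hor with ⟨-, w, hw1, hw2⟩ | ⟨hnot, -⟩
        · refine ⟨rfl, fun hfγ => hne rfl hfγ.symm, ?_⟩
          rcases hw1 with rfl | rfl
          · exact Or.inl hw2
          · exact Or.inr hw2
        · exact absurd hh hnot
      · obtain ⟨rfl, hor⟩ := hrel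
        rcases hor with ⟨-, w, hw1, hw2⟩ | ⟨hnot, -⟩
        · refine ⟨rfl, fun hfγ => hne rfl hfγ.symm, ?_⟩
          rcases hw2 with rfl | rfl
          · exact Or.inl hw1
          · exact Or.inr hw1
        · exact absurd hh hnot
    · rintro ⟨rfl, hfγ, hmem⟩
      refine ⟨fun _ hc => hfγ hc.symm, Or.inl ⟨rfl, Or.inl ⟨hh, ?_⟩⟩⟩
      rcases hmem with hb | hd
      · exact ⟨β, Or.inl rfl, hb⟩
      · exact ⟨δ, Or.inr rfl, hd⟩
  have hn2 : 2 ≤ n := by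
    have h1 : 1 < Fintype.card V := Fintype.one_lt_card_iff_nontrivial.mpr ⟨⟨β, δ, hβδ⟩⟩
    omega
  have cardV : Fintype.card {α : V // α ∉ (γ : Sym2 V)} = n - 2 := by
    have hiff : ∀ α : V, α ∈ (γ : Sym2 V) ↔ α = β ∨ α = δ := fun α => by
      rw [hγ, Sym2.mem_iff]
    calc Fintype.card {α : V // α ∉ (γ : Sym2 V)}
        = Fintype.card {α : V // ¬(α = β ∨ α = δ)} :=
          Fintype.card_congr (Equiv.subtypeEquivRight fun α => by rw [hiff])
      _ = Fintype.card V - Fintype.card {α : V // α = β ∨ α = δ} :=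
          Fintype.card_subtype_compl _
      _ = n - 2 := by
          rw [hn]
          congr 1
          rw [Fintype.card_subtype]
          have hfil : (Finset.univ.filter fun α : V => α = β ∨ α = δ) = {β, δ} := by
            ext α; simp
          rw [hfil, Finset.card_insert_of_notMem (by simpa using hβδ),
            Finset.card_singleton]
  have cardL : Fintype.card {a : Fin r × V // G.Adj v (Sum.inl a)} = r * (n - 2) := by
    rw [Fintype.card_congr (Equiv.subtypeEquivRight hadjL)]
    rw [Fintype.card_congr
      (((Equiv.prodComm (Fin r) V).subtypeEquiv (fun a => Iff.rfl) :
          {a : Fin r × V // a.2 ∉ (γ : Sym2 V)} ≃ {b : V × Fin r // b.1 ∉ (γ : Sym2 V)}).trans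
        (Equiv.prodSubtypeFstEquivSubtypeProd (p := fun α : V => α ∉ (γ : Sym2 V))))]
    rw [Fintype.card_prod, cardV, Fintype.card_fin, Nat.mul_comm]
  have hdβ : 0 < Q.degree β := by
    rw [SimpleGraph.degree_pos_iff_exists_adj]; exact ⟨δ, hadjQ⟩
  have hdδ : 0 < Q.degree δ := by
    rw [SimpleGraph.degree_pos_iff_exists_adj]; exact ⟨β, hadjQ.symm⟩
  have cardR : Fintype.card {b : Fin s × Q.edgeSet // G.Adj v (Sum.inr b)}
      = Q.degree β + Q.degree δ - 2 := by
    rw [Fintype.card_congr (Equiv.subtypeEquivRight hadjR)]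
    have e1 : {b : Fin s × Q.edgeSet //
          b.1 = h ∧ b.2 ≠ γ ∧ (β ∈ (b.2 : Sym2 V) ∨ δ ∈ (b.2 : Sym2 V))}
        ≃ {f : Q.edgeSet // f ≠ γ ∧ (β ∈ (f : Sym2 V) ∨ δ ∈ (f : Sym2 V))} :=
      { toFun := fun b => ⟨b.1.2, b.2.2⟩
        invFun := fun f => ⟨(h, f.1), rfl, f.2⟩
        left_inv := by rintro ⟨⟨h', f⟩, rfl, hf⟩; rfl
        right_inv := fun f => rfl }
    have e2 : {f : Q.edgeSet // f ≠ γ ∧ (β ∈ (f : Sym2 V) ∨ δ ∈ (f : Sym2 V))}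
        ≃ {e : Sym2 V // e ∈ Q.edgeSet ∧ (e ≠ (γ : Sym2 V) ∧ (β ∈ e ∨ δ ∈ e))} :=
      (Equiv.subtypeEquivRight (fun f => by
        simp [Ne, Subtype.ext_iff])).trans
        (Equiv.subtypeSubtypeEquivSubtypeInter _ _)
    rw [Fintype.card_congr (e1.trans e2), Fintype.card_subtype]
    have hfil : (Finset.univ.filter fun e : Sym2 V =>
          e ∈ Q.edgeSet ∧ (e ≠ (γ : Sym2 V) ∧ (β ∈ e ∨ δ ∈ e)))
        = (Q.incidenceFinset β ∪ Q.incidenceFinset δ).erase (γ : Sym2 V) := by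
      ext e
      simp only [Finset.mem_filter, Finset.mem_univ, true_and, Finset.mem_erase,
        Finset.mem_union, SimpleGraph.mem_incidenceFinset, SimpleGraph.incidenceSet,
        Set.mem_setOf_eq, Set.mem_sep_iff, ne_eq]
      tauto
    rw [hfil]
    have hγmem : (γ : Sym2 V) ∈ Q.incidenceFinset β ∪ Q.incidenceFinset δ := by
      simp only [Finset.mem_union, SimpleGraph.mem_incidenceFinset,
        SimpleGraph.incidenceSet, Set.mem_sep_iff]
      exact Or.inl ⟨γ.2, by rw [hγ]; simp⟩
    rw [Finset.card_erase_of_mem hγmem]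
    have hint : Q.incidenceFinset β ∩ Q.incidenceFinset δ = {(γ : Sym2 V)} := by
      ext e
      simp only [Finset.mem_inter, SimpleGraph.mem_incidenceFinset,
        SimpleGraph.incidenceSet, Set.mem_sep_iff, Finset.mem_singleton]
      constructor
      · rintro ⟨⟨he, hbe⟩, -, hde⟩
        rw [hγ]
        exact (Sym2.mem_and_mem_iff hβδ).mp ⟨hbe, hde⟩
      · rintro rfl
        refine ⟨⟨γ.2, ?_⟩, γ.2, ?_⟩ <;> rw [hγ] <;> simp
    have hu := Finset.card_union_add_card_inter (Q.incidenceFinset β) (Q.incidenceFinset δ)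
    rw [hint, Finset.card_singleton, SimpleGraph.card_incidenceFinset_eq_degree,
      SimpleGraph.card_incidenceFinset_eq_degree] at hu
    omega
  have hsum : G.degree v = r * (n - 2) + (Q.degree β + Q.degree δ - 2) := by
    rw [hdeg, Fintype.card_congr (Equiv.subtypeSum), Fintype.card_sum, cardL, cardR]
  rw [hsum]
  have hc1 : ((n - 2 : ℕ) : ℤ) = (n : ℤ) - 2 := by omega
  have hc2 : ((Q.degree β + Q.degree δ - 2 : ℕ) : ℤ)
      = (Q.degree β : ℤ) + Q.degree δ - 2 := by omega
  push_cast
  rw [hc1, hc2]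
  ring
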